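/- arXiv:2105.11049 — 2 statements merged into one kernel-verified Lean document; each statement's English description precedes it below -/
import Mathlib

section
/- Let F be a field, n ≥ 1, and A, B ∈ GL(n, F) with B = P A P⁻¹ for some invertible P. If moreover B = A^m for an integer m ≥ 2, then every eigenvalue λ of A (in an algebraic closure of F) satisfies λ^(m^r) = λ for some integer r with 1 ≤ r ≤ n; in particular every eigenvalue of A is a root of unity. -/
open Matrix Polynomial

lemma aux_eval_charpoly {K : Type*} [Field K] {n : ℕ} (M : Matrix (Fin n) (Fin n) K) (μ : K) :
    (Matrix.charpoly M).eval μ = Matrix.det (algebraMap K (Matrix (Fin n) (Fin n) K) μ - M) := by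
  rw [Matrix.charpoly, ← Polynomial.coe_evalRingHom, RingHom.map_det]
  congr 1
  ext i j
  by_cases h : i = j <;>
    simp [h, Matrix.charmatrix_apply, Matrix.diagonal_apply, Matrix.algebraMap_matrix_apply]

lemma aux_mem_spectrum_iff {K : Type*} [Field K] {n : ℕ} (M : Matrix (Fin n) (Fin n) K) (μ : K) :
    μ ∈ spectrum K M ↔ (Matrix.charpoly M).eval μ = 0 := by
  rw [spectrum.mem_iff, Matrix.isUnit_iff_isUnit_det, isUnit_iff_ne_zero, not_ne_iff,
    aux_eval_charpoly]

lemma aux_spectrum_conj_subset {K A : Type*} [Field K] [Ring A] [Algebra K A] {u v : A}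
    (huv : u * v = 1) (hvu : v * u = 1) (a : A) :
    spectrum K (u * a * v) ⊆ spectrum K a := by
  intro μ hμ
  rw [spectrum.mem_iff] at hμ ⊢
  intro h
  apply hμ
  have hu : IsUnit u := ⟨⟨u, v, huv, hvu⟩, rfl⟩
  have hv : IsUnit v := ⟨⟨v, u, hvu, huv⟩, rfl⟩
  have key : u * (algebraMap K A μ - a) * v = algebraMap K A μ - u * a * v := by
    rw [mul_sub, sub_mul, ← Algebra.commutes μ u, mul_assoc, huv, mul_one]
  rw [← key]
  exact (hu.mul h).mul hv

lemma aux_spectrum_conj {K A : Type*} [Field K] [Ring A] [Algebra K A] {u v : A}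
    (huv : u * v = 1) (hvu : v * u = 1) (a : A) :
    spectrum K (u * a * v) = spectrum K a := by
  refine subset_antisymm (aux_spectrum_conj_subset huv hvu a) ?_
  have : a = v * (u * a * v) * u := by
    rw [show v * (u * a * v) * u = (v * u) * a * (v * u) from by simp only [mul_assoc], hvu,
      one_mul, mul_one]
  nth_rewrite 1 [this]
  exact aux_spectrum_conj_subset hvu huv _

lemma aux_orbit {α : Type*} [Fintype α] (f : α → α) (hf : Function.Injective f) (x : α) :
    ∃ r : ℕ, 1 ≤ r ∧ r ≤ Fintype.card α ∧ f^[r] x = x := by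
  have hcard : Fintype.card α < Fintype.card (Fin (Fintype.card α + 1)) := by simp
  obtain ⟨i, j, hij, heq⟩ :=
    Fintype.exists_ne_map_eq_of_card_lt (fun i : Fin (Fintype.card α + 1) => f^[(i : ℕ)] x) hcard
  wlog hlt : (i : ℕ) < (j : ℕ) generalizing i j
  · exact this j i hij.symm heq.symm (by omega)
  refine ⟨(j : ℕ) - (i : ℕ), by omega, by omega, ?_⟩
  have h2 : f^[(i : ℕ)] (f^[(j : ℕ) - (i : ℕ)] x) = f^[(i : ℕ)] x := by
    rw [← Function.iterate_add_apply]
    rw [show (i : ℕ) + ((j : ℕ) - (i : ℕ)) = (j : ℕ) by omega]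
    exact heq.symm
  exact hf.iterate (i : ℕ) h2

theorem stmt_1 (F : Type*) [Field F] (n : ℕ) (hn : 1 ≤ n)
    (A B P : Matrix (Fin n) (Fin n) F) (hA : IsUnit A) (hP : IsUnit P)
    (hconj : B = P * A * P⁻¹) (m : ℕ) (hm : 2 ≤ m) (hpow : B = A ^ m) :
    ∀ lam : AlgebraicClosure F, (Polynomial.aeval lam) (Matrix.charpoly A) = 0 →
      (∃ r : ℕ, 1 ≤ r ∧ r ≤ n ∧ lam ^ (m ^ r) = lam) ∧ ∃ k : ℕ, 0 < k ∧ lam ^ k = 1 := by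
  classical
  intro lam hlam
  let K := AlgebraicClosure F
  let φ : F →+* K := algebraMap F K
  let ψ : Matrix (Fin n) (Fin n) F →+* Matrix (Fin n) (Fin n) K := φ.mapMatrix
  have hψA : ψ A = A.map φ := rfl
  have hchar : Matrix.charpoly (ψ A) = (Matrix.charpoly A).map φ := Matrix.charpoly_map A φ
  set S : Set K := spectrum K (ψ A) with hS
  -- lam ∈ S
  have hlamS : lam ∈ S := by
    rw [hS, aux_mem_spectrum_iff, hchar, Polynomial.eval_map, ← Polynomial.aeval_def]
    exact hlam
  -- conjugation invariance
  have hdet : IsUnit P.det := (Matrix.isUnit_iff_isUnit_det P).mp hP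
  have huv : ψ P * ψ P⁻¹ = 1 := by rw [← _root_.map_mul, Matrix.mul_nonsing_inv _ hdet, _root_.map_one]
  have hvu : ψ P⁻¹ * ψ P = 1 := by rw [← _root_.map_mul, Matrix.nonsing_inv_mul _ hdet, _root_.map_one]
  have hpows : spectrum K (ψ A ^ m) = S := by
    have h1 : ψ A ^ m = ψ P * ψ A * ψ P⁻¹ := by
      rw [← map_pow, ← hpow, hconj, _root_.map_mul, _root_.map_mul]
    rw [h1]
    exact aux_spectrum_conj huv hvu (ψ A)
  have himg : (fun x : K => x ^ m) '' S = S := by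
    rw [hS, ← spectrum.map_pow_of_pos (ψ A) (by omega : 0 < m)]
    exact hpows
  -- finiteness of S, card ≤ n
  have hmono : (Matrix.charpoly (ψ A)).Monic := Matrix.charpoly_monic _
  have hne : Matrix.charpoly (ψ A) ≠ 0 := hmono.ne_zero
  have hSsub : S ⊆ ↑(Matrix.charpoly (ψ A)).roots.toFinset := by
    intro μ hμ
    rw [hS, aux_mem_spectrum_iff] at hμ
    simp only [Finset.coe_sort_coe, Multiset.mem_toFinset, Finset.mem_coe]
    exact (Polynomial.mem_roots hne).mpr hμ
  have hfin : S.Finite := Set.Finite.subset (Set.finite_coe_iff.mp inferInstance) hSsub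
  have hcardle : hfin.toFinset.card ≤ n := by
    have h1 : hfin.toFinset ⊆ (Matrix.charpoly (ψ A)).roots.toFinset := by
      intro x hx
      exact hSsub (hfin.mem_toFinset.mp hx)
    calc hfin.toFinset.card ≤ (Matrix.charpoly (ψ A)).roots.toFinset.card :=
          Finset.card_le_card h1
      _ ≤ Multiset.card (Matrix.charpoly (ψ A)).roots := Multiset.toFinset_card_le _
      _ ≤ (Matrix.charpoly (ψ A)).natDegree := Polynomial.card_roots' _
      _ = n := by rw [Matrix.charpoly_natDegree_eq_dim, Fintype.card_fin]
  -- the self-map on the subtype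
  set T := hfin.toFinset with hT
  have hmemT : ∀ x : K, x ∈ T ↔ x ∈ S := fun x => hfin.mem_toFinset
  have hstep : ∀ x : K, x ∈ S → x ^ m ∈ S := by
    intro x hx
    rw [← himg]
    exact ⟨x, hx, rfl⟩
  let f : {x // x ∈ T} → {x // x ∈ T} :=
    fun x => ⟨x.val ^ m, (hmemT _).mpr (hstep x.val ((hmemT _).mp x.property))⟩
  have hfsurj : Function.Surjective f := by
    rintro ⟨y, hy⟩
    have hy' : y ∈ S := (hmemT _).mp hy
    rw [← himg] at hy'
    obtain ⟨x, hx, hxy⟩ := hy'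
    exact ⟨⟨x, (hmemT _).mpr hx⟩, Subtype.ext hxy⟩
  have hfinj : Function.Injective f := (Finite.injective_iff_surjective).mpr hfsurj
  -- iterate values
  have hiter : ∀ (r : ℕ) (x : {x // x ∈ T}), (f^[r] x).val = x.val ^ (m ^ r) := by
    intro r
    induction r with
    | zero => intro x; rw [Function.iterate_zero_apply, pow_zero, pow_one]
    | succ r ih =>
      intro x
      rw [Function.iterate_succ_apply', show (f (f^[r] x)).val = (f^[r] x).val ^ m from rfl,
        ih x, ← pow_mul, ← pow_succ]
  obtain ⟨r, hr1, hr2, hrfix⟩ := aux_orbit f hfinj ⟨lam, (hmemT _).mpr hlamS⟩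
  have hr2' : r ≤ n := le_trans hr2 (by rw [Fintype.card_coe]; exact hcardle)
  have hfix : lam ^ (m ^ r) = lam := by
    have := congrArg Subtype.val hrfix
    rwa [hiter r _] at this
  refine ⟨⟨r, hr1, hr2', hfix⟩, ?_⟩
  -- root of unity
  have hlam0 : lam ≠ 0 := by
    intro h0
    rw [h0] at hlamS
    exact (spectrum.zero_mem_iff K).mp hlamS (hA.map ψ)
  have hmr : 2 ≤ m ^ r := le_trans hm (Nat.le_self_pow (by omega) m)
  refine ⟨m ^ r - 1, by omega, ?_⟩
  have h1 : lam ^ (m ^ r - 1) * lam = 1 * lam := by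
    rw [one_mul, ← pow_succ, Nat.sub_add_cancel (by omega)]
    exact hfix
  exact mul_right_cancel₀ hlam0 h1
end

section
/- Let ρ : G → GL(V) be a representation of a group G on a finite-dimensional vector space V over an algebraically closed field, and let H be a subgroup of G such that every element of ρ(H) is unipotent. Then the subspace of H-invariants V^H is nonzero whenever V is nonzero. -/
/-!
Kolchin's theorem. Restricted to a simple `F[H]`-submodule `W` of `V`, the image of `F[H]` is all
of `End W` by Burnside's theorem (Jacobson density plus Schur's lemma over the algebraically closed
field `F`). Every unipotent operator on `W` has trace `dim W`, so for `h ∈ H` the operator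
`ρ h - 1` is orthogonal for the trace form to every `ρ h'`, hence to all of `End W`;
nondegeneracy of the trace form forces `ρ h = 1` on `W`.
-/

open Module MonoidAlgebra

theorem Algebra.lsmul_surjective_of_isSimpleModule {F A M : Type*} [Field F] [IsAlgClosed F]
    [Ring A] [Algebra F A] [AddCommGroup M] [Module F M] [Module A M] [IsScalarTower F A M]
    [FiniteDimensional F M] [IsSimpleModule A M] :
    Function.Surjective (Algebra.lsmul F F M : A →ₐ[F] End F M) := by
  have hschur := IsSimpleModule.algebraMap_end_bijective_of_isAlgClosed F (A := A) (V := M)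
  have : Module.Finite (End A M) M := .of_restrictScalars_finite F _ _
  intro f
  let g : End (End A M) M :=
    { f with
      map_smul' := fun s m => by
        obtain ⟨c, rfl⟩ := hschur.2 s
        exact f.map_smul c m }
  obtain ⟨a, ha⟩ := Module.Finite.toModuleEnd_moduleEnd_surjective (R := A) (M := M) g
  exact ⟨a, LinearMap.ext fun m => LinearMap.congr_fun ha m⟩

theorem LinearMap.eq_zero_of_forall_trace_mul_eq_zero {K V : Type*} [Field K] [AddCommGroup V]
    [Module K V] [FiniteDimensional K V] {N : End K V}
    (h : ∀ f : End K V, trace K V (N * f) = 0) : N = 0 := by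
  refine LinearMap.ext fun x => by_contra fun hx => ?_
  obtain ⟨ψ, hψ⟩ := Projective.exists_dual_ne_zero K hx
  have hcomp : N * ψ.smulRight x = ψ.smulRight (N x) := by ext; simp
  exact hψ (by simpa [hcomp, trace_smulRight] using h (ψ.smulRight x))

theorem LinearMap.trace_eq_finrank_of_isNilpotent_sub_one {K V : Type*} [Field K] [AddCommGroup V]
    [Module K V] [FiniteDimensional K V] {f : End K V} (hf : IsNilpotent (f - 1)) :
    trace K V f = finrank K V := by
  have h := (isNilpotent_trace_of_isNilpotent hf).eq_zero
  rwa [map_sub, trace_one, sub_eq_zero] at h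

theorem Submodule.isNilpotent_lsmul {F A M : Type*} [CommSemiring F] [Semiring A] [Algebra F A]
    [AddCommMonoid M] [Module F M] [Module A M] [IsScalarTower F A M] (N : Submodule A M) {a : A}
    (ha : IsNilpotent (Algebra.lsmul F F M a)) : IsNilpotent (Algebra.lsmul F F N a) := by
  obtain ⟨n, hn⟩ := ha
  rw [← map_pow] at hn
  refine ⟨n, ?_⟩
  rw [← map_pow]
  ext x
  exact LinearMap.congr_fun hn x

theorem Algebra.lsmul_eq_one_of_forall_trace_lsmul_mul {F A M : Type*} [Field F] [IsAlgClosed F]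
    [Ring A] [Algebra F A] [AddCommGroup M] [Module F M] [Module A M] [IsScalarTower F A M]
    [FiniteDimensional F M] [IsSimpleModule A M] {a : A}
    (ha : ∀ b : A, LinearMap.trace F M (Algebra.lsmul F F M (a * b)) =
      LinearMap.trace F M (Algebra.lsmul F F M b)) :
    Algebra.lsmul F F M a = 1 := by
  rw [← sub_eq_zero]
  refine LinearMap.eq_zero_of_forall_trace_mul_eq_zero fun f => ?_
  obtain ⟨b, rfl⟩ := Algebra.lsmul_surjective_of_isSimpleModule (F := F) (A := A) (M := M) f
  rw [sub_mul, one_mul, ← map_mul, map_sub, ha, sub_self]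

namespace MonoidAlgebra

variable {F G M : Type*} [Field F] [Monoid G] [AddCommGroup M] [Module F M] [Module F[G] M]
  [IsScalarTower F F[G] M] [FiniteDimensional F M]

theorem trace_lsmul_single (hunip : ∀ g : G, IsNilpotent (Algebra.lsmul F F M (of F G g - 1)))
    (g : G) (c : F) :
    LinearMap.trace F M (Algebra.lsmul F F M (single g c)) = c * finrank F M := by
  have hg : IsNilpotent (Algebra.lsmul F F M (of F G g) - 1) := by
    simpa only [map_sub, map_one] using hunip g
  rw [← smul_of, map_smul, map_smul, smul_eq_mul,
    LinearMap.trace_eq_finrank_of_isNilpotent_sub_one hg]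

theorem of_smul_of_isSimpleModule [IsAlgClosed F] [IsSimpleModule F[G] M]
    (hunip : ∀ g : G, IsNilpotent (Algebra.lsmul F F M (of F G g - 1))) (g : G) (m : M) :
    of F G g • m = m := by
  have h := Algebra.lsmul_eq_one_of_forall_trace_lsmul_mul (F := F) (M := M) (a := of F G g)
    fun b => by
      induction b using MonoidAlgebra.induction_linear with
      | zero => simp only [mul_zero]
      | add x y hx hy => simp only [mul_add, map_add, hx, hy]
      | single h c =>
        rw [of_apply, single_mul_single, one_mul, trace_lsmul_single hunip,
          trace_lsmul_single hunip]
  exact LinearMap.congr_fun h m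

theorem exists_ne_zero_forall_of_smul [IsAlgClosed F] [Nontrivial M]
    (hunip : ∀ g : G, IsNilpotent (Algebra.lsmul F F M (of F G g - 1))) :
    ∃ m : M, m ≠ 0 ∧ ∀ g : G, of F G g • m = m := by
  have : IsArtinian F[G] M := isArtinian_of_tower F inferInstance
  obtain h | ⟨N, hN, -⟩ := IsAtomic.eq_bot_or_exists_atom_le (⊤ : Submodule F[G] M)
  · exact absurd h top_ne_bot
  have : IsSimpleModule F[G] N := isSimpleModule_iff_isAtom.mpr hN
  have : Nontrivial N := IsSimpleModule.nontrivial F[G] N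
  have : FiniteDimensional F N := inferInstanceAs (FiniteDimensional F (N.restrictScalars F))
  obtain ⟨m, hm⟩ := exists_ne (0 : N)
  refine ⟨m, by simpa using hm, fun g => ?_⟩
  exact congrArg Subtype.val
    (of_smul_of_isSimpleModule (fun g => N.isNilpotent_lsmul (hunip g)) g m)

end MonoidAlgebra

namespace Representation

variable {F G V : Type*} [Field F] [Monoid G] [AddCommGroup V] [Module F V]

theorem lsmul_asModule_of (ρ : Representation F G V) (g : G) :
    (Algebra.lsmul F F ρ.asModule (MonoidAlgebra.of F G g) : End F V) = ρ g :=
  LinearMap.ext fun v => (ρ.single_smul 1 g v).trans (one_smul F _)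

theorem exists_ne_zero_forall_apply_eq_self [IsAlgClosed F] [FiniteDimensional F V]
    [Nontrivial V] (ρ : Representation F G V) (hunip : ∀ g : G, IsNilpotent (ρ g - 1)) :
    ∃ v : V, v ≠ 0 ∧ ∀ g : G, ρ g v = v := by
  have : Nontrivial ρ.asModule := inferInstanceAs (Nontrivial V)
  have hunip' (g : G) :
      IsNilpotent (Algebra.lsmul F F ρ.asModule (MonoidAlgebra.of F G g - 1)) := by
    rw [map_sub, map_one]
    exact ρ.lsmul_asModule_of g ▸ hunip g
  obtain ⟨v, hv, hfix⟩ := MonoidAlgebra.exists_ne_zero_forall_of_smul hunip'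
  exact ⟨v, hv, fun g => ρ.lsmul_asModule_of g ▸ hfix g⟩

end Representation

theorem stmt_2 (F : Type*) [Field F] [IsAlgClosed F] (G : Type*) [Group G]
    (V : Type*) [AddCommGroup V] [Module F V] [FiniteDimensional F V] [Nontrivial V]
    (ρ : Representation F G V) (H : Subgroup G)
    (hunip : ∀ h ∈ H, IsNilpotent (ρ h - LinearMap.id)) :
    ∃ v : V, v ≠ 0 ∧ ∀ h ∈ H, ρ h v = v := by
  obtain ⟨v, hv, hfix⟩ :=
    Representation.exists_ne_zero_forall_apply_eq_self (ρ.comp H.subtype) fun h => hunip h h.2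
  exact ⟨v, hv, fun h hh => hfix ⟨h, hh⟩⟩
end
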